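/- arXiv:1412.5849 — 3 statements merged into one kernel-verified Lean document; each statement's English description precedes it below -/
import Mathlib

section
/- For every finite group G, the rainbow connection number of the power graph Γ_G is at least |M_G|, the number of maximal involutions of G. -/
/-!
A maximal involution `x` is a pendant vertex of the power graph: `⟨x⟩ = {1, x}`, and any `g` with
`x ∈ ⟨g⟩` has `⟨g⟩ = ⟨x⟩`, so the only neighbour of `x` is `1`. A rainbow path between two
maximal involutions `x ≠ y` must therefore use both pendant edges `x1` and `y1`, so a rainbow
colouring gives all pendant edges pairwise distinct colours.
-/

/-- The power graph of a group `G`: distinct elements `x` and `y` are adjacent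
iff one is a power of the other. -/
def powerGraph (G : Type*) [Group G] : SimpleGraph G where
  Adj x y := x ≠ y ∧ (x ∈ Subgroup.zpowers y ∨ y ∈ Subgroup.zpowers x)
  symm := ⟨fun x y h => ⟨h.1.symm, h.2.symm⟩⟩
  loopless := ⟨fun x h => h.1 rfl⟩

/-- `ζ` is a rainbow `k`-coloring of `Γ`: every pair of vertices is joined by a
path whose edges receive pairwise distinct colors. -/
def IsRainbowColoring {V : Type*} (Γ : SimpleGraph V) {k : ℕ} (ζ : Sym2 V → Fin k) : Prop :=
  ∀ u v : V, ∃ p : Γ.Walk u v, p.IsPath ∧ (p.edges.map ζ).Nodup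

/-- The rainbow connection number of `Γ`: the least `k` admitting a rainbow
`k`-coloring. -/
noncomputable def rainbowConnection {V : Type*} (Γ : SimpleGraph V) : ℕ :=
  sInf {k : ℕ | ∃ ζ : Sym2 V → Fin k, IsRainbowColoring Γ ζ}

/-- An element `x` is a maximal involution if it has order 2 and the only
cyclic subgroup containing `x` is `⟨x⟩`. -/
def IsMaximalInvolution {G : Type*} [Group G] (x : G) : Prop :=
  orderOf x = 2 ∧ ∀ g : G, x ∈ Subgroup.zpowers g → Subgroup.zpowers g = Subgroup.zpowers x

open SimpleGraph Subgroup

namespace SimpleGraph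

variable {V : Type*} {Γ : SimpleGraph V}

lemma Walk.mem_edges_of_neighborSet_eq_singleton {u v c : V} (hu : Γ.neighborSet u = {c})
    (huv : u ≠ v) (p : Γ.Walk u v) : s(u, c) ∈ p.edges := by
  cases p with
  | nil => exact absurd rfl huv
  | cons h q =>
    obtain rfl : _ = c := (Set.ext_iff.1 hu _).1 h
    exact List.mem_cons_self

lemma exists_isRainbowColoring [Finite V] (hΓ : Γ.Connected) :
    ∃ k, ∃ ζ : Sym2 V → Fin k, IsRainbowColoring Γ ζ := by
  classical
  obtain ⟨k, ⟨e⟩⟩ := Finite.exists_equiv_fin (Sym2 V)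
  refine ⟨k, e, fun u v => ?_⟩
  obtain ⟨p⟩ := hΓ.preconnected u v
  exact ⟨p.toPath, p.toPath.2, (Walk.edges_nodup_of_support_nodup p.toPath.2.support_nodup).map
    e.injective⟩

lemma IsRainbowColoring.card_le_of_neighborSet_eq_singleton {k : ℕ} {ζ : Sym2 V → Fin k}
    (hζ : IsRainbowColoring Γ ζ) (S : Set V) {c : V} (hS : ∀ x ∈ S, Γ.neighborSet x = {c}) :
    Nat.card S ≤ k := by
  suffices Function.Injective fun x : S => ζ s(x.1, c) by
    simpa using Nat.card_le_card_of_injective _ this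
  rintro ⟨a, ha⟩ ⟨b, hb⟩ hab
  by_contra hne
  have hne : a ≠ b := fun h => hne (Subtype.ext h)
  have hac : Γ.Adj a c := by simp [← mem_neighborSet, hS a ha]
  obtain ⟨p, -, hp⟩ := hζ a b
  have hpa := p.mem_edges_of_neighborSet_eq_singleton (hS a ha) hne
  have hpb := p.reverse.mem_edges_of_neighborSet_eq_singleton (hS b hb) hne.symm
  rw [Walk.edges_reverse, List.mem_reverse] at hpb
  rcases Sym2.eq_iff.1 (List.inj_on_of_nodup_map hp hpa hpb hab) with ⟨h, -⟩ | ⟨h, -⟩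
  · exact hne h
  · exact hac.ne h

lemma le_rainbowConnection [Finite V] (hΓ : Γ.Connected) {n : ℕ}
    (h : ∀ k (ζ : Sym2 V → Fin k), IsRainbowColoring Γ ζ → n ≤ k) :
    n ≤ rainbowConnection Γ :=
  le_csInf (exists_isRainbowColoring hΓ) fun _ ⟨ζ, hζ⟩ => h _ ζ hζ

end SimpleGraph

section PowerGraph

variable {G : Type*} [Group G]

lemma powerGraph_adj_one {x : G} (hx : x ≠ 1) : (powerGraph G).Adj x 1 :=
  ⟨hx, Or.inr (one_mem _)⟩

lemma powerGraph_connected : (powerGraph G).Connected := by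
  refine (connected_iff_exists_forall_reachable _).2 ⟨1, fun x => ?_⟩
  obtain rfl | hx := eq_or_ne x 1
  · rfl
  · exact (powerGraph_adj_one hx).symm.reachable

lemma eq_one_or_eq_of_mem_zpowers_of_orderOf_eq_two {x w : G} (hx : orderOf x = 2)
    (hw : w ∈ zpowers x) : w = 1 ∨ w = x := by
  obtain ⟨n, rfl⟩ := hw
  show x ^ n = 1 ∨ x ^ n = x
  rw [← zpow_mod_orderOf, hx]
  rcases Int.emod_two_eq n with h | h <;> push_cast <;> rw [h] <;> simp

lemma IsMaximalInvolution.neighborSet_powerGraph {x : G} (hx : IsMaximalInvolution x) :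
    (powerGraph G).neighborSet x = {1} := by
  have hx1 : x ≠ 1 := fun h => by simpa [h] using hx.1
  ext w
  refine ⟨fun ⟨hxw, hmem⟩ => ?_, fun hw => hw ▸ powerGraph_adj_one hx1⟩
  have hw : w ∈ zpowers x := hmem.elim (fun h => hx.2 w h ▸ mem_zpowers w) id
  exact (eq_one_or_eq_of_mem_zpowers_of_orderOf_eq_two hx.1 hw).resolve_right (Ne.symm hxw)

end PowerGraph

theorem card_maximalInvolutions_le_rc_powerGraph
    (G : Type*) [Group G] [Fintype G] :
    Nat.card {x : G // IsMaximalInvolution x} ≤ rainbowConnection (powerGraph G) :=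
  le_rainbowConnection powerGraph_connected fun _ _ hζ =>
    hζ.card_le_of_neighborSet_eq_singleton {x | IsMaximalInvolution x}
      fun _ hx => hx.neighborSet_powerGraph
end

section
/- If G is a finite group of order at least 3 with exactly 1 maximal involution, then the rainbow connection number of the power graph Γ_G equals 3. -/
section RainbowConnection

open SimpleGraph

variable {V : Type*} {Γ : SimpleGraph V}

theorem SimpleGraph.Walk.exists_adj_adj_of_nodup_map {k : ℕ} (hk : k ≤ 2)
    {ζ : Sym2 V → Fin k} {a b : V} (p : Γ.Walk a b) (hp : (p.edges.map ζ).Nodup) (hab : a ≠ b)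
    (hnadj : ¬Γ.Adj a b) : ∃ w, Γ.Adj a w ∧ Γ.Adj w b ∧ ζ s(a, w) ≠ ζ s(w, b) := by
  have hlen : p.length ≤ 2 := by simpa using hp.length_le_card.trans (by simpa using hk)
  match p, hp, hlen with
  | nil, _, _ => exact absurd rfl hab
  | cons h nil, _, _ => exact absurd h hnadj
  | cons h₁ (cons h₂ nil), hp, _ => exact ⟨_, h₁, h₂, by simpa using hp⟩
  | cons _ (cons _ (cons _ _)), _, hlen => simp at hlen

theorem IsRainbowColoring.three_le {k : ℕ} {ζ : Sym2 V → Fin k} (hζ : IsRainbowColoring Γ ζ)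
    {x c u v : V} (hx : ∀ w, Γ.Adj x w → w = c) (hux : u ≠ x) (huc : u ≠ c) (hvx : v ≠ x)
    (hvc : v ≠ c) (huv : u ≠ v) (hnadj : ¬Γ.Adj u v)
    (hcommon : ∀ w, Γ.Adj u w → Γ.Adj w v → w = c) : 3 ≤ k := by
  by_contra! hk
  have spoke : ∀ y, y ≠ x → y ≠ c → ζ s(x, c) ≠ ζ s(c, y) := by
    intro y hyx hyc
    obtain ⟨p, -, hp⟩ := hζ x y
    obtain ⟨w, hxw, -, hw⟩ := p.exists_adj_adj_of_nodup_map (by omega) hp hyx.symm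
      (fun h => hyc (hx y h))
    rwa [hx w hxw] at hw
  obtain ⟨p, -, hp⟩ := hζ u v
  obtain ⟨w, huw, hwv, hw⟩ := p.exists_adj_adj_of_nodup_map (by omega) hp huv hnadj
  rw [hcommon w huw hwv, Sym2.eq_swap] at hw
  have h₁ := spoke u hux huc
  have h₂ := spoke v hvx hvc
  simp only [ne_eq, Fin.ext_iff] at h₁ h₂ hw
  omega

section Hub

variable [DecidableEq V] (c : V) (P : V → Prop) [DecidablePred P]

def hubColoring : Sym2 V → Fin 3 :=
  Sym2.lift ⟨fun a b => if a = c then (if P b then 0 else 1)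
    else if b = c then (if P a then 0 else 1) else 2, fun a b => by
      by_cases ha : a = c <;> by_cases hb : b = c <;> simp [ha, hb]⟩

theorem hubColoring_hub_left (v : V) : hubColoring c P s(c, v) = if P v then 0 else 1 := by
  simp [hubColoring]

theorem hubColoring_hub_right (v : V) : hubColoring c P s(v, c) = if P v then 0 else 1 := by
  rw [Sym2.eq_swap, hubColoring_hub_left]

theorem hubColoring_of_ne {u v : V} (hu : u ≠ c) (hv : v ≠ c) : hubColoring c P s(u, v) = 2 := by
  simp [hubColoring, hu, hv]

variable {c P} {x : V} (hc : ∀ v, v ≠ c → Γ.Adj c v)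
  (hP : ∀ u, u ≠ c → u ≠ x → ∃ w, Γ.Adj u w ∧ w ≠ c ∧ ¬(P w ↔ P u))
include hc hP

theorem exists_isPath_nodup_hubColoring {u v : V} (huv : u ≠ v) (hux : u ≠ x) :
    ∃ p : Γ.Walk u v, p.IsPath ∧ (p.edges.map (hubColoring c P)).Nodup := by
  by_cases huc : u = c
  · subst huc
    exact ⟨(hc v huv.symm).toWalk, by simpa using huv, by simp⟩
  by_cases hvc : v = c
  · subst hvc
    exact ⟨(hc u huc).symm.toWalk, by simpa using huv, by simp⟩
  by_cases hPuv : P u ↔ P v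
  · obtain ⟨w, huw, hwc, hPw⟩ := hP u huc hux
    have hPwv : ¬(P w ↔ P v) := fun h => hPw (h.trans hPuv.symm)
    have hwv : w ≠ v := by rintro rfl; exact hPwv Iff.rfl
    refine ⟨.cons huw (.cons (hc w hwc).symm (.cons (hc v hvc) .nil)), ?_, ?_⟩
    · simp [Walk.isPath_def, huw.ne, huc, huv, hwc, hwv, Ne.symm hvc]
    · by_cases hw : P w <;> by_cases hv : P v <;>
        simp_all [hubColoring_of_ne c P huc hwc, hubColoring_hub_left, hubColoring_hub_right]
  · refine ⟨.cons (hc u huc).symm (.cons (hc v hvc) .nil), ?_, ?_⟩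
    · simp [Walk.isPath_def, huc, huv, Ne.symm hvc]
    · by_cases hu : P u <;> by_cases hv : P v <;>
        simp_all [hubColoring_hub_left, hubColoring_hub_right]

theorem isRainbowColoring_hubColoring : IsRainbowColoring Γ (hubColoring c P) := by
  intro u v
  by_cases huv : u = v
  · subst huv
    exact ⟨.nil, by simp, by simp⟩
  by_cases hux : u = x
  · obtain ⟨p, hp, hnodup⟩ :=
      exists_isPath_nodup_hubColoring hc hP (Ne.symm huv) (hux ▸ Ne.symm huv)
    exact ⟨p.reverse, hp.reverse, by simpa [Walk.edges_reverse, List.map_reverse] using hnodup⟩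
  · exact exists_isPath_nodup_hubColoring hc hP huv hux

end Hub

end RainbowConnection

open Subgroup

section Group

variable {G : Type*} [Group G]

theorem ne_one_of_orderOf_eq_two {x : G} (hx : orderOf x = 2) : x ≠ 1 := by
  rintro rfl
  simp at hx

theorem mem_zpowers_iff_of_orderOf_eq_two {x w : G} (hx : orderOf x = 2) :
    w ∈ zpowers x ↔ w = 1 ∨ w = x := by
  classical
  have hfin : IsOfFinOrder x := orderOf_pos_iff.1 (by rw [hx]; norm_num)
  simp [hfin.mem_zpowers_iff_mem_range_orderOf, hx, Finset.range_add_one, or_comm, eq_comm]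

theorem eq_of_mem_zpowers_of_orderOf_eq_two [Finite G] {w u v : G} (hu : u ∈ zpowers w)
    (hv : v ∈ zpowers w) (hu2 : orderOf u = 2) (hv2 : orderOf v = 2) : u = v := by
  classical
  have := Fintype.ofFinite (zpowers w)
  have h2 : 2 ∣ Fintype.card (zpowers w) := by
    rw [← hu2, ← orderOf_mk u hu]
    exact orderOf_dvd_card
  have hcard := IsCyclic.card_orderOf_eq_totient h2
  rw [Nat.totient_two] at hcard
  exact congrArg Subtype.val <| Finset.card_le_one.1 hcard.le ⟨u, hu⟩
    (by simp [orderOf_mk, hu2]) ⟨v, hv⟩ (by simp [orderOf_mk, hv2])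

theorem exists_orderOf_eq_two_mem_zpowers [Finite G] {g : G} (hg : Even (orderOf g)) :
    ∃ w ∈ zpowers g, orderOf w = 2 :=
  ⟨_, npow_mem_zpowers g (orderOf g / 2),
    orderOf_pow_orderOf_div (orderOf_pos g).ne' (even_iff_two_dvd.1 hg)⟩

theorem Commute.orderOf_mul_eq_two {x y : G} (hxy : Commute x y) (hx : orderOf x = 2)
    (hy : orderOf y = 2) (hne : x ≠ y) : orderOf (x * y) = 2 := by
  refine orderOf_eq_prime ?_ ?_
  · rw [hxy.mul_pow, ← hx, pow_orderOf_eq_one, one_mul, hx, ← hy, pow_orderOf_eq_one]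
  · rwa [Ne, mul_eq_one_iff_eq_inv, inv_eq_self_of_orderOf_eq_two hy]

theorem powerGraph_adj_one_s6 {v : G} (hv : v ≠ 1) : (powerGraph G).Adj 1 v :=
  ⟨hv.symm, Or.inl (one_mem _)⟩

theorem eq_one_or_mem_zpowers_of_powerGraph_adj {u w : G} (hu : orderOf u = 2)
    (h : (powerGraph G).Adj u w) : w = 1 ∨ u ∈ zpowers w := by
  rcases h.2 with huw | hwu
  · exact Or.inr huw
  · exact Or.inl (((mem_zpowers_iff_of_orderOf_eq_two hu).1 hwu).resolve_right h.ne.symm)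

theorem not_powerGraph_adj_of_orderOf_eq_two {u v : G} (hu : orderOf u = 2)
    (hv : orderOf v = 2) (hne : u ≠ v) : ¬(powerGraph G).Adj u v := by
  intro h
  rcases eq_one_or_mem_zpowers_of_powerGraph_adj hu h with rfl | huv
  · simp at hv
  · rcases (mem_zpowers_iff_of_orderOf_eq_two hv).1 huv with rfl | rfl
    · simp at hu
    · exact hne rfl

theorem eq_one_of_powerGraph_adj_of_adj [Finite G] {u v w : G} (hu : orderOf u = 2)
    (hv : orderOf v = 2) (hne : u ≠ v) (huw : (powerGraph G).Adj u w)
    (hwv : (powerGraph G).Adj w v) : w = 1 := by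
  rcases eq_one_or_mem_zpowers_of_powerGraph_adj hu huw with hw | huw
  · exact hw
  rcases eq_one_or_mem_zpowers_of_powerGraph_adj hv hwv.symm with hw | hvw
  · exact hw
  · exact absurd (eq_of_mem_zpowers_of_orderOf_eq_two huw hvw hu hv) hne

theorem exists_powerGraph_adj_orderOf_ne_two {u : G} (hu : orderOf u = 2)
    (hmax : ¬IsMaximalInvolution u) :
    ∃ g, (powerGraph G).Adj u g ∧ g ≠ 1 ∧ orderOf g ≠ 2 := by
  simp only [IsMaximalInvolution, hu, true_and, not_forall] at hmax
  obtain ⟨g, hug, hne⟩ := hmax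
  have hgu : u ≠ g := by rintro rfl; exact hne rfl
  refine ⟨g, ⟨hgu, Or.inl hug⟩, ?_, fun hg => ?_⟩
  · rintro rfl
    simp_all
  · rcases (mem_zpowers_iff_of_orderOf_eq_two hg).1 hug with rfl | rfl
    · simp at hu
    · exact hgu rfl

end Group

namespace IsMaximalInvolution

variable {G : Type*} [Group G] {x : G} (hx : IsMaximalInvolution x)
include hx

theorem eq_one_or_eq_of_mem_zpowers {g : G} (hg : x ∈ zpowers g) : g = 1 ∨ g = x :=
  (mem_zpowers_iff_of_orderOf_eq_two hx.1).1 (hx.2 g hg ▸ mem_zpowers g)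

theorem ne_of_mem_zpowers {g w : G} (hw : w ∈ zpowers g) (hg1 : g ≠ 1) (hgx : g ≠ x) : w ≠ x := by
  rintro rfl
  rcases hx.eq_one_or_eq_of_mem_zpowers hw with h | h
  exacts [hg1 h, hgx h]

theorem eq_one_of_powerGraph_adj {w : G} (h : (powerGraph G).Adj x w) : w = 1 := by
  rcases eq_one_or_mem_zpowers_of_powerGraph_adj hx.1 h with hw | hw
  · exact hw
  · exact (hx.eq_one_or_eq_of_mem_zpowers hw).resolve_right h.ne.symm

theorem map_mulEquiv {H : Type*} [Group H] (φ : G ≃* H) : IsMaximalInvolution (φ x) := by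
  refine ⟨by rw [MulEquiv.orderOf_eq, hx.1], fun g hg => ?_⟩
  have hmem : x ∈ zpowers (φ.symm g) := by
    obtain ⟨k, hk⟩ := mem_zpowers_iff.1 hg
    exact mem_zpowers_iff.2 ⟨k, by rw [← map_zpow, hk, MulEquiv.symm_apply_apply]⟩
  calc zpowers g = (zpowers (φ.symm g)).map φ.toMonoidHom := by
        rw [MonoidHom.map_zpowers]; simp
    _ = zpowers (φ x) := by rw [hx.2 _ hmem, MonoidHom.map_zpowers]; rfl

theorem commute_of_forall_eq (huniq : ∀ y : G, IsMaximalInvolution y → y = x) (g : G) :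
    Commute g x :=
  mul_inv_eq_iff_eq_mul.1 (huniq _ (hx.map_mulEquiv (MulAut.conj g)))

theorem even_orderOf (hcomm : ∀ g : G, Commute g x) {u : G} (hu : u ≠ 1) :
    Even (orderOf u) := by
  by_contra hodd
  rw [Nat.not_even_iff_odd] at hodd
  have hxu : x ∈ zpowers (x * u) := by
    refine mem_zpowers_iff.2 ⟨orderOf u, ?_⟩
    rw [zpow_natCast, (hcomm u).symm.mul_pow, pow_orderOf_eq_one, mul_one, ← pow_mod_orderOf,
      hx.1, Nat.odd_iff.1 hodd, pow_one]
  rcases hx.eq_one_or_eq_of_mem_zpowers hxu with h | h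
  · rw [eq_inv_of_mul_eq_one_right h, inv_eq_self_of_orderOf_eq_two hx.1, hx.1] at hodd
    exact absurd hodd (by decide)
  · exact hu (mul_eq_left.1 h)

theorem exists_powerGraph_adj_ne_one [Finite G] (huniq : ∀ y : G, IsMaximalInvolution y → y = x)
    {u : G} (hu1 : u ≠ 1) (hux : u ≠ x) :
    ∃ w, (powerGraph G).Adj u w ∧ w ≠ 1 ∧
      ¬((orderOf w = 2 ∧ w ≠ x) ↔ (orderOf u = 2 ∧ u ≠ x)) := by
  by_cases hu2 : orderOf u = 2
  · obtain ⟨g, hug, hg1, hg2⟩ :=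
      exists_powerGraph_adj_orderOf_ne_two hu2 fun hmax => hux (huniq u hmax)
    exact ⟨g, hug, hg1, by simp [hg2, hu2, hux]⟩
  · obtain ⟨w, hw, hw2⟩ := exists_orderOf_eq_two_mem_zpowers
      (hx.even_orderOf (hx.commute_of_forall_eq huniq) hu1)
    have hwu : u ≠ w := by rintro rfl; exact hu2 hw2
    refine ⟨w, ⟨hwu, Or.inr hw⟩, by rintro rfl; simp at hw2, ?_⟩
    simp [hw2, hu2, hx.ne_of_mem_zpowers hw hu1 hux]

end IsMaximalInvolution

theorem rc_powerGraph_eq_three_of_one_maximalInvolution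
    (G : Type*) [Group G] [Fintype G] (hG : 3 ≤ Fintype.card G)
    (h : Nat.card {x : G // IsMaximalInvolution x} = 1) :
    rainbowConnection (powerGraph G) = 3 := by
  classical
  obtain ⟨⟨x, hx⟩, huniq⟩ := Nat.card_eq_one_iff_exists.1 h
  replace huniq : ∀ y, IsMaximalInvolution y → y = x := fun y hy =>
    congrArg Subtype.val (huniq ⟨y, hy⟩)
  have hcomm := hx.commute_of_forall_eq huniq
  obtain ⟨g, -, hg⟩ := Finset.exists_mem_notMem_of_card_lt_card (s := {1, x})
    (t := Finset.univ) (Finset.card_le_two.trans_lt (by rw [Finset.card_univ]; omega))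
  simp only [Finset.mem_insert, Finset.mem_singleton, not_or] at hg
  obtain ⟨t, ht, ht2⟩ := exists_orderOf_eq_two_mem_zpowers (hx.even_orderOf hcomm hg.1)
  have htx : t ≠ x := hx.ne_of_mem_zpowers ht hg.1 hg.2
  have hxt2 : orderOf (x * t) = 2 := (hcomm t).symm.orderOf_mul_eq_two hx.1 ht2 htx.symm
  have hne : t ≠ x * t := fun h => ne_one_of_orderOf_eq_two hx.1 (right_eq_mul.1 h)
  refine IsLeast.csInf_eq ⟨⟨_, isRainbowColoring_hubColoring
    (P := fun v => orderOf v = 2 ∧ v ≠ x) (fun _ => powerGraph_adj_one_s6)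
    fun _ => hx.exists_powerGraph_adj_ne_one huniq⟩, ?_⟩
  rintro k ⟨ζ, hζ⟩
  exact hζ.three_le (fun _ => hx.eq_one_of_powerGraph_adj) htx (ne_one_of_orderOf_eq_two ht2)
    (fun h => ne_one_of_orderOf_eq_two ht2 (mul_eq_left.1 h)) (ne_one_of_orderOf_eq_two hxt2) hne
    (not_powerGraph_adj_of_orderOf_eq_two ht2 hxt2 hne)
    fun _ => eq_one_of_powerGraph_adj_of_adj ht2 hxt2 hne
end

section
/- For every integer n ≥ 3, the rainbow connection number of the power graph of the generalized quaternion group Q_{4n} of order 4n equals 3. -/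
open SimpleGraph Subgroup

section RainbowColoring

variable {V : Type*} {Γ : SimpleGraph V}

theorem rainbowConnection_eq_of {k : ℕ} (hk : ∃ ζ : Sym2 V → Fin k, IsRainbowColoring Γ ζ)
    (hlt : ∀ m < k, ∀ ζ : Sym2 V → Fin m, ¬ IsRainbowColoring Γ ζ) :
    rainbowConnection Γ = k :=
  le_antisymm (Nat.sInf_le hk) <| le_csInf ⟨k, hk⟩ fun m ⟨ζ, hζ⟩ =>
    not_lt.1 fun hm => hlt m hm ζ hζ

theorem IsRainbowColoring.exists_adj_adj_ne {k : ℕ} {ζ : Sym2 V → Fin k}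
    (hζ : IsRainbowColoring Γ ζ) (hk : k ≤ 2) {u v : V} (huv : u ≠ v) (hadj : ¬ Γ.Adj u v) :
    ∃ w, Γ.Adj u w ∧ Γ.Adj w v ∧ ζ s(u, w) ≠ ζ s(w, v) := by
  obtain ⟨p, -, hnd⟩ := hζ u v
  have hlen : p.length ≤ 2 := by simpa using hnd.length_le_card.trans (by simpa using hk)
  match p, hlen, hnd with
  | .nil, _, _ => exact absurd rfl huv
  | .cons h .nil, _, _ => exact absurd h hadj
  | .cons h (.cons h' .nil), _, hnd => exact ⟨_, h, h', by simpa using hnd⟩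
  | .cons _ (.cons _ (.cons _ _)), hlen, _ => simp at hlen

theorem IsRainbowColoring.ne_of_commonNeighbors_subset {k : ℕ} {ζ : Sym2 V → Fin k}
    (hζ : IsRainbowColoring Γ ζ) (hk : k ≤ 2) {u v c₁ c₂ : V} (huv : u ≠ v)
    (hadj : ¬ Γ.Adj u v) (hcommon : Γ.commonNeighbors u v ⊆ {c₁, c₂}) :
    (ζ s(u, c₁), ζ s(u, c₂)) ≠ (ζ s(v, c₁), ζ s(v, c₂)) := by
  obtain ⟨w, huw, hwv, hne⟩ := hζ.exists_adj_adj_ne hk huv hadj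
  rw [Sym2.eq_swap (a := w)] at hne
  intro h
  rcases hcommon (Γ.mem_commonNeighbors.2 ⟨huw, hwv.symm⟩) with rfl | rfl
  · exact hne (congrArg Prod.fst h)
  · exact hne (congrArg Prod.snd h)

def starColoring [DecidableEq V] (e : V) (c : V → Fin 2) : Sym2 V → Fin 3 :=
  Sym2.lift ⟨fun x y => if x = e then (c y).castSucc else if y = e then (c x).castSucc
    else 2, fun x y => by dsimp only; split_ifs <;> simp_all⟩

theorem isRainbowColoring_starColoring [DecidableEq V] {e : V} (he : ∀ v ≠ e, Γ.Adj v e)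
    {c : V → Fin 2} (hc : ∀ v ≠ e, ∃ w ≠ e, Γ.Adj v w ∧ c w ≠ c v) :
    IsRainbowColoring Γ (starColoring e c) := by
  intro u v
  by_cases huv : u = v
  · subst huv
    exact ⟨.nil, by simp⟩
  by_cases hadj : Γ.Adj u v
  · exact ⟨hadj.toWalk, by simp [hadj.ne]⟩
  have hu : u ≠ e := by rintro rfl; exact hadj (he v (Ne.symm huv)).symm
  have hv : v ≠ e := by rintro rfl; exact hadj (he u huv)
  by_cases hcuv : c u = c v
  · obtain ⟨w, hwe, hvw, hcw⟩ := hc v hv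
    have hwu : w ≠ u := by rintro rfl; exact hadj hvw.symm
    refine ⟨.cons (he u hu) (.cons (he w hwe).symm (.cons hvw.symm .nil)), ?_, ?_⟩
    · simp [Walk.isPath_def, hu, huv, hwu.symm, hwe.symm, hv.symm, hvw.ne.symm]
    · have hlast : ∀ i : Fin 2, i.castSucc ≠ 2 := by decide
      simp [starColoring, hu, hv, hwe, hcuv, hlast, Ne.symm hcw]
  · refine ⟨.cons (he u hu) (.cons (he v hv).symm .nil), ?_, ?_⟩
    · simp [Walk.isPath_def, hu, huv, hv.symm]
    · simp [starColoring, hu, hcuv]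

end RainbowColoring

section PowerGraph

variable {G : Type*} [Group G]

theorem powerGraph_adj_one_s13 {g : G} (hg : g ≠ 1) : (powerGraph G).Adj g 1 :=
  ⟨hg, .inr (one_mem _)⟩

theorem powerGraph_adj_inv {g : G} (hg : g⁻¹ ≠ g) : (powerGraph G).Adj g g⁻¹ :=
  ⟨hg.symm, .inr (inv_mem (mem_zpowers g))⟩

theorem exists_two_coloring_inv_ne : ∃ c : G → Fin 2, ∀ g : G, g⁻¹ ≠ g → c g⁻¹ ≠ c g := by
  classical
  refine ⟨fun g => if WellOrderingRel g g⁻¹ then 0 else 1, fun g hg => ?_⟩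
  rcases trichotomous_of WellOrderingRel g g⁻¹ with h | h | h
  · simp [h, asymm h]
  · exact absurd h.symm hg
  · simp [h, asymm h]

theorem exists_adj_inv_ne_of_not_isMaximalInvolution {t : G} (ht : orderOf t = 2)
    (hmax : ¬ IsMaximalInvolution t) :
    ∃ g : G, g⁻¹ ≠ g ∧ (powerGraph G).Adj t g ∧ (powerGraph G).Adj t g⁻¹ := by
  obtain ⟨g, htg, hne⟩ : ∃ g, t ∈ zpowers g ∧ zpowers g ≠ zpowers t := by
    simpa [IsMaximalInvolution, ht] using hmax
  have ht1 : t ≠ 1 := by rintro rfl; simp at ht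
  have hgt : t ≠ g := by rintro rfl; exact hne rfl
  have hg : g⁻¹ ≠ g := by
    intro hg
    have hg2 : orderOf g = 2 := orderOf_eq_prime (by rw [sq, mul_eq_one_iff_eq_inv, hg])
      (by rintro rfl; simp_all)
    obtain ⟨k, rfl⟩ := mem_zpowers_iff.1 htg
    rw [← zpow_mod_orderOf, hg2] at ht1 hgt
    rcases Int.emod_two_eq_zero_or_one k with hk | hk <;> simp_all
  refine ⟨g, hg, ⟨hgt, .inl htg⟩, ⟨?_, .inl (by rwa [zpowers_inv])⟩⟩
  rintro rfl
  exact hne zpowers_inv.symm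

theorem exists_isRainbowColoring_powerGraph (h : ∀ t : G, ¬ IsMaximalInvolution t) :
    ∃ ζ : Sym2 G → Fin 3, IsRainbowColoring (powerGraph G) ζ := by
  classical
  obtain ⟨c, hc⟩ := exists_two_coloring_inv_ne (G := G)
  refine ⟨starColoring 1 c, isRainbowColoring_starColoring (fun _ => powerGraph_adj_one_s13)
    fun g hg => ?_⟩
  by_cases hinv : g⁻¹ = g
  · have ht : orderOf g = 2 := orderOf_eq_prime (by rw [sq, mul_eq_one_iff_eq_inv, hinv]) hg
    obtain ⟨x, hx, hgx, hgx'⟩ := exists_adj_inv_ne_of_not_isMaximalInvolution ht (h g)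
    have hx1 : x ≠ 1 := by rintro rfl; simp at hx
    by_cases hcx : c x = c g
    · exact ⟨x⁻¹, inv_ne_one.2 hx1, hgx', hcx ▸ hc x hx⟩
    · exact ⟨x, hx1, hgx, hcx⟩
  · exact ⟨g⁻¹, inv_ne_one.2 hg, powerGraph_adj_inv hinv, hc g hinv⟩

end PowerGraph

namespace QuaternionGroup

variable {n : ℕ}

theorem natCast_add_natCast_self : (n : ZMod (2 * n)) + n = 0 := by
  rw [← two_mul]
  exact_mod_cast ZMod.natCast_self (2 * n)

theorem a_zpow (i : ZMod (2 * n)) (k : ℤ) : a i ^ k = a ((k : ZMod (2 * n)) * i) := by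
  induction k using Int.induction_on with
  | zero => rw [zpow_zero, Int.cast_zero, zero_mul, one_def]
  | succ k ih => rw [zpow_add_one, ih, a_mul_a]; push_cast; ring_nf
  | pred k ih => rw [zpow_sub_one, ih]; exact congrArg a (by push_cast; ring)

theorem xa_notMem_zpowers_a (i j : ZMod (2 * n)) : xa j ∉ zpowers (a i) := by
  rintro ⟨k, hk⟩
  simp [a_zpow] at hk

theorem xa_pow_three (j : ZMod (2 * n)) : xa j ^ 3 = xa (j + (n : ZMod (2 * n))) := by
  rw [pow_succ, xa_sq, a_mul_xa, sub_eq_add_neg,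
    neg_eq_of_add_eq_zero_right natCast_add_natCast_self]

section NeZero

variable [NeZero n]

theorem a_mem_zpowers_a_one (i : ZMod (2 * n)) : a i ∈ zpowers (a 1 : QuaternionGroup n) :=
  ⟨(i.val : ℤ), by dsimp only; rw [zpow_natCast, a_one_pow, ZMod.natCast_zmod_val]⟩

theorem mem_zpowers_xa_iff {g : QuaternionGroup n} {j : ZMod (2 * n)} :
    g ∈ zpowers (xa j) ↔ g = 1 ∨ g = a n ∨ g = xa j ∨ g = xa (j + (n : ZMod (2 * n))) := by
  classical
  rw [mem_zpowers_iff_mem_range_orderOf, orderOf_xa]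
  simp only [Finset.mem_image, Finset.mem_range]
  constructor
  · rintro ⟨k, hk, rfl⟩
    interval_cases k <;> simp [xa_sq, xa_pow_three]
  · rintro (rfl | rfl | rfl | rfl)
    exacts [⟨0, by simp⟩, ⟨2, by simp [xa_sq]⟩, ⟨1, by simp⟩, ⟨3, by simp [xa_pow_three]⟩]

theorem not_adj_a_xa {i : ZMod (2 * n)} (hi0 : i ≠ 0) (hin : i ≠ n) (j : ZMod (2 * n)) :
    ¬ (powerGraph (QuaternionGroup n)).Adj (a i) (xa j) := by
  rintro ⟨-, h | h⟩
  · simp [mem_zpowers_xa_iff, one_def, -a_zero, hi0, hin] at h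
  · exact xa_notMem_zpowers_a i j h

theorem eq_of_adj_xa {g : QuaternionGroup n} {j : ZMod (2 * n)}
    (h : (powerGraph (QuaternionGroup n)).Adj g (xa j)) :
    g = 1 ∨ g = a n ∨ g = xa (j + (n : ZMod (2 * n))) := by
  obtain ⟨hne, h | h⟩ := h
  · rcases mem_zpowers_xa_iff.1 h with h | h | h | h
    exacts [.inl h, .inr (.inl h), absurd h hne, .inr (.inr h)]
  · cases g with
    | a i => exact absurd h (xa_notMem_zpowers_a i j)
    | xa m =>
      have hjm : j = m ∨ j = m + n := by simpa [mem_zpowers_xa_iff, one_def, -a_zero] using h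
      rcases hjm with rfl | hjm
      · exact absurd rfl hne
      · exact .inr (.inr (congrArg xa (by linear_combination -hjm - natCast_add_natCast_self)))

theorem eq_add_of_xa_adj_xa {i j : ZMod (2 * n)}
    (h : (powerGraph (QuaternionGroup n)).Adj (xa i) (xa j)) : i = j + n := by
  simpa [one_def, -a_zero] using eq_of_adj_xa h

theorem commonNeighbors_xa_subset {v : QuaternionGroup n} {j : ZMod (2 * n)}
    (hv : ¬ (powerGraph (QuaternionGroup n)).Adj v (xa (j + (n : ZMod (2 * n))))) :
    (powerGraph (QuaternionGroup n)).commonNeighbors v (xa j) ⊆ {1, a n} := by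
  intro w hw
  rw [mem_commonNeighbors] at hw
  rcases eq_of_adj_xa hw.2.symm with rfl | rfl | rfl
  exacts [.inl rfl, .inr rfl, absurd hw.1 hv]

variable {k : ℕ}

def centralProfile (ζ : Sym2 (QuaternionGroup n) → Fin k) (g : QuaternionGroup n) :
    Fin k × Fin k :=
  (ζ s(g, 1), ζ s(g, a n))

variable {ζ : Sym2 (QuaternionGroup n) → Fin k}

theorem centralProfile_ne_xa {v : QuaternionGroup n} {j : ZMod (2 * n)}
    (hζ : IsRainbowColoring (powerGraph (QuaternionGroup n)) ζ) (hk : k ≤ 2) (hv : v ≠ xa j)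
    (hadj : ¬ (powerGraph (QuaternionGroup n)).Adj v (xa j))
    (hadj' : ¬ (powerGraph (QuaternionGroup n)).Adj v (xa (j + (n : ZMod (2 * n))))) :
    centralProfile ζ v ≠ centralProfile ζ (xa j) :=
  hζ.ne_of_commonNeighbors_subset hk hv hadj (commonNeighbors_xa_subset hadj')

theorem centralProfile_a_ne_xa (hζ : IsRainbowColoring (powerGraph (QuaternionGroup n)) ζ)
    (hk : k ≤ 2) {i : ZMod (2 * n)} (hi0 : i ≠ 0) (hin : i ≠ n) (j : ZMod (2 * n)) :
    centralProfile ζ (a i) ≠ centralProfile ζ (xa j) :=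
  centralProfile_ne_xa hζ hk (by simp) (not_adj_a_xa hi0 hin j) (not_adj_a_xa hi0 hin _)

theorem centralProfile_xa_ne_xa (hζ : IsRainbowColoring (powerGraph (QuaternionGroup n)) ζ)
    (hk : k ≤ 2) {i j : ZMod (2 * n)} (hij : i ≠ j) (hijn : i ≠ j + n) :
    centralProfile ζ (xa i) ≠ centralProfile ζ (xa j) := by
  refine centralProfile_ne_xa hζ hk (by simpa using hij) (fun h => hijn (eq_add_of_xa_adj_xa h))
    fun h => hij ?_
  have := eq_add_of_xa_adj_xa h
  rwa [add_assoc, natCast_add_natCast_self, add_zero] at this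

end NeZero

theorem not_isMaximalInvolution (hn : 2 ≤ n) (t : QuaternionGroup n) :
    ¬ IsMaximalInvolution t := by
  have : NeZero n := ⟨by omega⟩
  rintro ⟨ht, hmax⟩
  cases t with
  | a i =>
    have := congrArg (fun H : Subgroup _ => Nat.card H) (hmax _ (a_mem_zpowers_a_one i))
    simp only [Nat.card_zpowers, orderOf_a_one, ht] at this
    omega
  | xa j => simp [orderOf_xa] at ht

theorem not_isRainbowColoring_powerGraph_of_four_le (hn : 4 ≤ n) {k : ℕ} (hk : k ≤ 2)
    (ζ : Sym2 (QuaternionGroup n) → Fin k) :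
    ¬ IsRainbowColoring (powerGraph (QuaternionGroup n)) ζ := by
  intro hζ
  have : NeZero n := ⟨by omega⟩
  have hcast : ∀ x y : ℕ, x < 2 * n → y < 2 * n → x ≠ y → (x : ZMod (2 * n)) ≠ y :=
    fun x y hx hy hxy h =>
      hxy (by simpa [ZMod.natCast_eq_natCast_iff', Nat.mod_eq_of_lt, hx, hy] using h)
  have h10 : (1 : ZMod (2 * n)) ≠ 0 := by
    exact_mod_cast hcast 1 0 (by omega) (by omega) one_ne_zero
  have h1n : (1 : ZMod (2 * n)) ≠ n := by
    exact_mod_cast hcast 1 n (by omega) (by omega) (by omega)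
  let v : Option (Fin 4) → QuaternionGroup n := fun o => o.elim (a 1) fun i => xa (i : ℕ)
  have hinj : Function.Injective (centralProfile ζ ∘ v) := by
    rintro (_ | i) (_ | j) h
    · rfl
    · exact absurd h (centralProfile_a_ne_xa hζ hk h10 h1n _)
    · exact absurd h.symm (centralProfile_a_ne_xa hζ hk h10 h1n _)
    · by_contra hij
      replace hij : (i : ℕ) ≠ j := fun h => hij (by simp [Fin.ext h])
      refine centralProfile_xa_ne_xa hζ hk (hcast _ _ (by omega) (by omega) hij) ?_ h
      exact_mod_cast hcast i (j + n) (by omega) (by omega) (by omega)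
  have := Fintype.card_le_of_injective _ hinj
  simp only [Fintype.card_option, Fintype.card_fin, Fintype.card_prod] at this
  nlinarith

theorem not_isRainbowColoring_powerGraph_three {k : ℕ} (hk : k ≤ 2)
    (ζ : Sym2 (QuaternionGroup 3) → Fin k) :
    ¬ IsRainbowColoring (powerGraph (QuaternionGroup 3)) ζ := by
  intro hζ
  have ha2 : ¬ (powerGraph (QuaternionGroup 3)).Adj (a 2) (a 3) := by
    rintro ⟨-, ⟨m, hm⟩ | ⟨m, hm⟩⟩ <;> simp only [a_zpow, a.injEq] at hm <;> revert hm
    exacts [(by decide : ∀ x : ZMod 6, x * 3 ≠ 2) _, (by decide : ∀ x : ZMod 6, x * 2 ≠ 3) _]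
  have hcenter : ∀ j : ZMod (2 * 3), ζ s(a 2, 1) ≠ ζ s(xa j, 1) := by
    intro j h
    refine hζ.ne_of_commonNeighbors_subset hk (c₁ := 1) (c₂ := 1) (by simp)
      (not_adj_a_xa (by decide) (by decide) j) (fun w hw => ?_) (Prod.ext h h)
    rcases commonNeighbors_xa_subset (not_adj_a_xa (by decide) (by decide) _) hw with rfl | rfl
    exacts [.inl rfl, absurd ((mem_commonNeighbors _).1 hw).1 ha2]
  have hfin : ∀ x y z : Fin k, x ≠ z → y ≠ z → x = y := by
    intro x y z hxz hyz
    have := x.isLt; have := y.isLt; have := z.isLt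
    rw [Ne, Fin.ext_iff] at hxz hyz
    exact Fin.ext (by omega)
  have hcast : ∀ i j : Fin 3, i ≠ j →
      ((i : ℕ) : ZMod (2 * 3)) ≠ j ∧ ((i : ℕ) : ZMod (2 * 3)) ≠ j + 3 := by
    decide
  have hinj : Function.Injective fun i : Fin 3 => ζ s(xa (i : ℕ), a 3) := by
    intro i j h
    by_contra hij
    exact centralProfile_xa_ne_xa hζ hk (hcast i j hij).1 (hcast i j hij).2
      (Prod.ext (hfin _ _ _ (hcenter _).symm (hcenter _).symm) h)
  have := Fintype.card_le_of_injective _ hinj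
  simp only [Fintype.card_fin] at this
  omega

end QuaternionGroup

theorem rc_powerGraph_generalizedQuaternion (n : ℕ) (hn : 3 ≤ n) :
    rainbowConnection (powerGraph (QuaternionGroup n)) = 3 := by
  refine rainbowConnection_eq_of
    (exists_isRainbowColoring_powerGraph (QuaternionGroup.not_isMaximalInvolution (by omega)))
    fun k hk ζ => ?_
  obtain rfl | hn4 : n = 3 ∨ 4 ≤ n := by omega
  · exact QuaternionGroup.not_isRainbowColoring_powerGraph_three (by omega) ζ
  · exact QuaternionGroup.not_isRainbowColoring_powerGraph_of_four_le hn4 (by omega) ζ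
end
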